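/- Left weakening: for arbitrary contexts Δ and Γ (both possibly containing locks) and any type A, there is an operation leftConcat_Δ : (Γ ⊢ A) → (Δ ++ Γ ⊢ A) on IKC terms, where Δ ++ Γ denotes context concatenation. -/
import Mathlib

namespace IKC

/-- Types of the Fitch-style calculus: base type ι, functions, box. -/
inductive Ty : Type
  | base : Ty
  | arr : Ty → Ty → Ty
  | box : Ty → Ty

/-- Typing contexts: empty, extension by a type, extension by a lock 🔒. -/
inductive Cx : Type
  | nil : Cx
  | snoc : Cx → Ty → Cx
  | lock : Cx → Cx

/-- IKC modal accessibility relation Δ ◁ Γ: Γ = Δ,🔒,Δ' with Δ' lock-free. -/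
inductive Ext : Cx → Cx → Type
  | nil : Ext Γ (.lock Γ)
  | var : Ext Δ Γ → Ext Δ (.snoc Γ A)

/-- De Bruijn variables (no rule through locks). -/
inductive Var : Cx → Ty → Type
  | zero : Var (.snoc Γ A) A
  | succ : Var Γ A → Var (.snoc Γ B) A

/-- Intrinsically-typed terms of IKC. -/
inductive Tm : Cx → Ty → Type
  | var : Var Γ A → Tm Γ A
  | lam : Tm (.snoc Γ A) B → Tm Γ (.arr A B)
  | app : Tm Γ (.arr A B) → Tm Γ A → Tm Γ B
  | box : Tm (.lock Γ) A → Tm Γ (.box A)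
  | unbox : Tm Δ (.box A) → Ext Δ Γ → Tm Γ A

/-- Concatenation of contexts: Δ ++ Γ appends the entries of Γ to the right of Δ. -/
def Cx.concat : Cx → Cx → Cx
  | Δ, .nil => Δ
  | Δ, .snoc Γ A => .snoc (Cx.concat Δ Γ) A
  | Δ, .lock Γ => .lock (Cx.concat Δ Γ)

def wkExt (Δ : Cx) : Ext Δ' Γ → Ext (Cx.concat Δ Δ') (Cx.concat Δ Γ)
  | .nil => .nil
  | .var e => .var (wkExt Δ e)

def wkVar (Δ : Cx) : Var Γ A → Var (Cx.concat Δ Γ) A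
  | .zero => .zero
  | .succ v => .succ (wkVar Δ v)

def wk (Δ : Cx) : Tm Γ A → Tm (Cx.concat Δ Γ) A
  | .var v => .var (wkVar Δ v)
  | .lam t => .lam (wk Δ t)
  | .app t u => .app (wk Δ t) (wk Δ u)
  | .box t => .box (wk Δ t)
  | .unbox t e => .unbox (wk Δ t) (wkExt Δ e)

/-- Left weakening: for arbitrary contexts Δ and Γ (both possibly containing
locks) and any type A, there is an operation (Γ ⊢ A) → (Δ ++ Γ ⊢ A) on IKC
terms. -/
theorem left_weakening (Δ Γ : Cx) (A : Ty) :
    Nonempty (Tm Γ A → Tm (Cx.concat Δ Γ) A) := by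
  exact ⟨wk Δ⟩

end IKC
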